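/- arXiv:2504.10723 — 2 statements merged into one kernel-verified Lean document; each statement's English description precedes it below -/
import Mathlib

section
/- Let n ≥ 1, p ∈ (1, ∞), θ > 0, σ ∈ (θ, 1+θ), and set β = (2+θ)/(1+θ). Let B : B₁ → ℝⁿ and ϱ : B₁ → ℝ be bounded functions with sup-norms b := ‖B‖_{L^∞} and ρ₀ := ‖ϱ‖_{L^∞}, and let 𝔠₀ > 0. If 0 < κ < min{ 1, 𝔠₀^{1/θ} / ( β^{(1+θ)/θ} [ n − 1 + (β−1)(p−1) + b + β^{σ−(1+θ)} ρ₀ ]^{1/θ} ) }, then the function ψ(x) = κ|x|^β satisfies, for every x ∈ ℝⁿ with 0 < |x| < 1, the pointwise strict inequality |∇ψ(x)|^θ ( Δ_p^N ψ(x) + ⟨B(x), ∇ψ(x)⟩ ) + ϱ(x) |∇ψ(x)|^σ < 𝔠₀. -/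
/-!
For `ψ = κ|x|^β` one has `∇ψ = κβ|x|^{β-2} x`, and `x` is an eigenvector of `D²ψ` with eigenvalue
`κβ(β-1)|x|^{β-2}`, so `Δ_p^N ψ = κβ|x|^{β-2}(n-1+(β-1)(p-1))`. The exponent `β = (2+θ)/(1+θ)` is
chosen so that `(β-1)(1+θ) = 1`; then `|∇ψ|^θ · κβ|x|^{β-2} = (κβ)^{1+θ}` does not depend on `x`.
Using `κ ≤ 1`, `|x| < 1` and `σ ≥ θ`, each of the three terms is at most `κ^θ β^{1+θ}` times the
corresponding summand of `n-1+(β-1)(p-1)+b+β^{σ-(1+θ)}ρ₀`, and the smallness of `κ` closes the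
estimate.
-/

open scoped RealInnerProductSpace
open Metric Filter

noncomputable section

/-- Euclidean space `ℝⁿ`. -/
abbrev E (n : ℕ) := EuclideanSpace ℝ (Fin n)

variable {n : ℕ}

/-- The Hessian of `u` at `x`, as a continuous linear map (derivative of the gradient). -/
def hess (u : E n → ℝ) (x : E n) : E n →L[ℝ] E n := fderiv ℝ (gradient u) x

/-- The Laplacian of `u` at `x` (trace of the Hessian). -/
def lap (u : E n → ℝ) (x : E n) : ℝ := LinearMap.trace ℝ (E n) (hess u x).toLinearMap

/-- The normalized (game-theoretic) `p`-Laplacian of `u` at `x`: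
`Δφ(x) + (p−2)|∇φ(x)|⁻²⟨D²φ(x)∇φ(x), ∇φ(x)⟩`. -/
def pLapN (p : ℝ) (u : E n → ℝ) (x : E n) : ℝ :=
  lap u x + (p - 2) * ⟪hess u x (gradient u x), gradient u x⟫ / ‖gradient u x‖ ^ 2

section Radial

variable {F : Type*} [NormedAddCommGroup F] [InnerProductSpace ℝ F]

theorem hasFDerivAt_norm_rpow_of_ne_zero {x : F} (hx : x ≠ 0) (β : ℝ) :
    HasFDerivAt (fun y : F ↦ ‖y‖ ^ β) ((β * ‖x‖ ^ (β - 2)) • innerSL ℝ x) x := by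
  apply HasStrictFDerivAt.hasFDerivAt
  convert! (hasStrictFDerivAt_norm_sq x).rpow_const (p := β / 2) (by simp [hx]) using 0
  simp_rw [← Real.rpow_natCast_mul (norm_nonneg _), ← Nat.cast_smul_eq_nsmul ℝ, smul_smul]
  ring_nf

variable [CompleteSpace F]

theorem hasGradientAt_const_mul_norm_rpow {x : F} (hx : x ≠ 0) (κ β : ℝ) :
    HasGradientAt (fun y : F ↦ κ * ‖y‖ ^ β) ((κ * β * ‖x‖ ^ (β - 2)) • x) x := by
  rw [hasGradientAt_iff_hasFDerivAt]
  refine ((hasFDerivAt_norm_rpow_of_ne_zero hx β).const_mul κ).congr_fderiv ?_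
  ext y
  simp [mul_assoc]

theorem gradient_const_mul_norm_rpow {x : F} (hx : x ≠ 0) (κ β : ℝ) :
    gradient (fun y : F ↦ κ * ‖y‖ ^ β) x = (κ * β * ‖x‖ ^ (β - 2)) • x :=
  (hasGradientAt_const_mul_norm_rpow hx κ β).gradient

theorem norm_gradient_const_mul_norm_rpow {x : F} (hx : x ≠ 0) {κ β : ℝ} (hκβ : 0 ≤ κ * β) :
    ‖gradient (fun y : F ↦ κ * ‖y‖ ^ β) x‖ = κ * β * ‖x‖ ^ (β - 1) := by
  have hr : 0 < ‖x‖ := norm_pos_iff.mpr hx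
  rw [gradient_const_mul_norm_rpow hx, norm_smul, Real.norm_of_nonneg (by positivity), mul_assoc,
    ← Real.rpow_add_one hr.ne']
  ring_nf

theorem fderiv_gradient_const_mul_norm_rpow {x : F} (hx : x ≠ 0) (κ β : ℝ) :
    fderiv ℝ (gradient fun y : F ↦ κ * ‖y‖ ^ β) x =
      (κ * β * ‖x‖ ^ (β - 2)) • ContinuousLinearMap.id ℝ F
        + ((κ * β * (β - 2) * ‖x‖ ^ (β - 4)) • innerSL ℝ x).smulRight x := by
  have hgrad : gradient (fun y : F ↦ κ * ‖y‖ ^ β) =ᶠ[nhds x]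
      fun y ↦ (κ * β * ‖y‖ ^ (β - 2)) • y := by
    filter_upwards [isOpen_ne.mem_nhds hx] with y hy
    exact gradient_const_mul_norm_rpow hy κ β
  have hcoeff := (hasGradientAt_const_mul_norm_rpow hx (κ * β) (β - 2)).hasFDerivAt
  have hprod : HasFDerivAt (fun y : F ↦ (κ * β * ‖y‖ ^ (β - 2)) • y) _ x :=
    hcoeff.smul (hasFDerivAt_id x)
  rw [hgrad.fderiv_eq, hprod.fderiv]
  ext y
  simp only [map_smul, add_apply, smul_apply, ContinuousLinearMap.id_apply,
    ContinuousLinearMap.smulRight_apply, InnerProductSpace.toDual_apply_apply, smul_eq_mul,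
    coe_innerSL_apply, add_right_inj]
  ring_nf

end Radial

theorem rpow_sub_four_mul_sq {r : ℝ} (hr : r ≠ 0) (β : ℝ) : r ^ (β - 4) * r ^ 2 = r ^ (β - 2) := by
  rw [← Real.rpow_add_natCast hr]
  ring_nf

theorem lap_const_mul_norm_rpow {x : E n} (hx : x ≠ 0) (κ β : ℝ) :
    lap (fun y : E n ↦ κ * ‖y‖ ^ β) x = κ * β * ‖x‖ ^ (β - 2) * (n + β - 2) := by
  rw [lap, hess, fderiv_gradient_const_mul_norm_rpow hx, ContinuousLinearMap.toLinearMap_add,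
    map_add, ContinuousLinearMap.toLinearMap_smul, map_smul, ContinuousLinearMap.coe_id,
    LinearMap.trace_id, ContinuousLinearMap.coe_smulRight, LinearMap.trace_smulRight,
    finrank_euclideanSpace_fin]
  simp only [ContinuousLinearMap.coe_coe, smul_apply, innerSL_apply_apply,
    real_inner_self_eq_norm_sq, smul_eq_mul]
  linear_combination κ * β * (β - 2) * rpow_sub_four_mul_sq (norm_ne_zero_iff.mpr hx) β

theorem hess_const_mul_norm_rpow_apply_self {x : E n} (hx : x ≠ 0) (κ β : ℝ) :
    hess (fun y : E n ↦ κ * ‖y‖ ^ β) x x = (κ * β * (β - 1) * ‖x‖ ^ (β - 2)) • x := by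
  rw [hess, fderiv_gradient_const_mul_norm_rpow hx]
  simp only [add_apply, smul_apply, ContinuousLinearMap.id_apply,
    ContinuousLinearMap.smulRight_apply, innerSL_apply_apply, real_inner_self_eq_norm_sq,
    smul_eq_mul, ← add_smul]
  congr 1
  linear_combination κ * β * (β - 2) * rpow_sub_four_mul_sq (norm_ne_zero_iff.mpr hx) β

theorem pLapN_const_mul_norm_rpow {x : E n} (hx : x ≠ 0) {κ β : ℝ} (hκ : κ ≠ 0) (hβ : β ≠ 0)
    (p : ℝ) :
    pLapN p (fun y : E n ↦ κ * ‖y‖ ^ β) x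
      = κ * β * ‖x‖ ^ (β - 2) * (n - 1 + (β - 1) * (p - 1)) := by
  set u := fun y : E n ↦ κ * ‖y‖ ^ β
  have hgrad : gradient u x ≠ 0 := by
    rw [gradient_const_mul_norm_rpow hx]
    exact smul_ne_zero (by positivity) hx
  have heigen : hess u x (gradient u x) = (κ * β * (β - 1) * ‖x‖ ^ (β - 2)) • gradient u x := by
    rw [gradient_const_mul_norm_rpow hx, map_smul, hess_const_mul_norm_rpow_apply_self hx,
      smul_comm]
  rw [pLapN, lap_const_mul_norm_rpow hx, heigen, real_inner_smul_left,
    real_inner_self_eq_norm_sq, mul_div_assoc, mul_div_cancel_right₀ _ (by positivity)]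
  ring

theorem mul_rpow_rpow_mul_mul_rpow {s r : ℝ} (hs : 0 < s) (hr : 0 < r) (a e θ : ℝ) :
    (s * r ^ a) ^ θ * (s * r ^ e) = s ^ (1 + θ) * r ^ (a * θ + e) := by
  rw [Real.mul_rpow hs.le (by positivity), ← Real.rpow_mul hr.le, Real.rpow_add hr,
    Real.rpow_add hs, Real.rpow_one]
  ring

theorem mul_rpow_le_rpow_mul_rpow {κ β θ t : ℝ} (hκ : 0 < κ) (hκ₁ : κ ≤ 1) (hβ : 0 ≤ β)
    (hθt : θ ≤ t) : (κ * β) ^ t ≤ κ ^ θ * β ^ t := by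
  rw [Real.mul_rpow hκ.le hβ]
  exact mul_le_mul_of_nonneg_right (Real.rpow_le_rpow_of_exponent_ge hκ hκ₁ hθt) (by positivity)

theorem rpow_mul_rpow_mul_lt_of_lt_div {κ β M c θ q : ℝ} (hθ : 0 < θ) (hκ : 0 ≤ κ) (hβ : 0 < β)
    (hM : 0 < M) (hc : 0 ≤ c) (h : κ < c ^ (1 / θ) / (β ^ (q / θ) * M ^ (1 / θ))) :
    κ ^ θ * β ^ q * M < c := by
  have ha : 0 < β ^ q * M := by positivity
  rw [div_eq_mul_one_div q, Real.rpow_mul hβ.le, ← Real.mul_rpow (by positivity) hM.le,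
    ← Real.div_rpow hc ha.le, one_div, Real.lt_rpow_inv_iff_of_pos hκ (by positivity) hθ,
    lt_div_iff₀ ha] at h
  linarith

theorem barrier_estimate {θ σ κ β r A b ρ₀ I ϱ : ℝ} (hθ : 0 < θ) (hθσ : θ ≤ σ) (hκ : 0 < κ)
    (hκ₁ : κ ≤ 1) (hβ : (β - 1) * (1 + θ) = 1) (hr : 0 < r) (hr₁ : r ≤ 1) (hA : 0 ≤ A)
    (hb : 0 ≤ b) (hρ₀ : 0 ≤ ρ₀) (hI : I ≤ b * (κ * β * r ^ (β - 1))) (hϱ : ϱ ≤ ρ₀) :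
    (κ * β * r ^ (β - 1)) ^ θ * (κ * β * r ^ (β - 2) * A + I)
        + ϱ * (κ * β * r ^ (β - 1)) ^ σ
      ≤ κ ^ θ * β ^ (1 + θ) * (A + b + β ^ (σ - (1 + θ)) * ρ₀) := by
  have hβ₀ : 0 < β := by nlinarith
  have hs : 0 < κ * β := mul_pos hκ hβ₀
  set g := κ * β * r ^ (β - 1)
  have hg : g ≤ κ * β := mul_le_of_le_one_right hs.le (Real.rpow_le_one hr.le hr₁ (by nlinarith))
  have hlap : g ^ θ * (κ * β * r ^ (β - 2)) = (κ * β) ^ (1 + θ) := by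
    rw [mul_rpow_rpow_mul_mul_rpow hs hr, show (β - 1) * θ + (β - 2) = 0 by linarith,
      Real.rpow_zero, mul_one]
  have hdrift : g ^ θ * g = (κ * β) ^ (1 + θ) * r := by
    rw [mul_rpow_rpow_mul_mul_rpow hs hr, show (β - 1) * θ + (β - 1) = 1 by linarith,
      Real.rpow_one]
  calc g ^ θ * (κ * β * r ^ (β - 2) * A + I) + ϱ * g ^ σ
      ≤ g ^ θ * (κ * β * r ^ (β - 2) * A + b * g) + ρ₀ * g ^ σ := by gcongr
    _ = (κ * β) ^ (1 + θ) * (A + b * r) + ρ₀ * g ^ σ := by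
      linear_combination A * hlap + b * hdrift
    _ ≤ (κ * β) ^ (1 + θ) * (A + b) + ρ₀ * (κ * β) ^ σ := by
      gcongr
      · exact mul_le_of_le_one_right hb hr₁
      · linarith
    _ ≤ κ ^ θ * β ^ (1 + θ) * (A + b) + ρ₀ * (κ ^ θ * β ^ σ) := by
      gcongr
      · exact mul_rpow_le_rpow_mul_rpow hκ hκ₁ hβ₀.le (by linarith)
      · exact mul_rpow_le_rpow_mul_rpow hκ hκ₁ hβ₀.le hθσ
    _ = κ ^ θ * β ^ (1 + θ) * (A + b + β ^ (σ - (1 + θ)) * ρ₀) := by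
      have hsplit : β ^ σ = β ^ (1 + θ) * β ^ (σ - (1 + θ)) := by
        rw [← Real.rpow_add hβ₀, add_sub_cancel]
      rw [hsplit]
      ring

theorem barrier_strict_subsolution_general
    (n : ℕ) (hn : 1 ≤ n) (p θ σ : ℝ) (hp : 1 < p) (hθ : 0 < θ)
    (hσ₁ : θ < σ)
    (B : E n → E n) (ϱ : E n → ℝ) (b ρ₀ c₀ κ : ℝ)
    (hc₀ : 0 < c₀)
    (hB : ∀ x ∈ ball (0 : E n) 1, ‖B x‖ ≤ b)
    (hϱ : ∀ x ∈ ball (0 : E n) 1, |ϱ x| ≤ ρ₀)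
    (hκ₀ : 0 < κ)
    (hκ : κ < min 1 (c₀ ^ (1 / θ) /
      (((2 + θ) / (1 + θ)) ^ ((1 + θ) / θ) *
        ((n : ℝ) - 1 + ((2 + θ) / (1 + θ) - 1) * (p - 1) + b +
          ((2 + θ) / (1 + θ)) ^ (σ - (1 + θ)) * ρ₀) ^ (1 / θ)))) :
    ∀ x : E n, x ≠ 0 → x ∈ ball (0 : E n) 1 →
      ‖gradient (fun y : E n => κ * ‖y‖ ^ ((2 + θ) / (1 + θ))) x‖ ^ θ *
          (pLapN p (fun y : E n => κ * ‖y‖ ^ ((2 + θ) / (1 + θ))) x +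
            ⟪B x, gradient (fun y : E n => κ * ‖y‖ ^ ((2 + θ) / (1 + θ))) x⟫) +
        ϱ x * ‖gradient (fun y : E n => κ * ‖y‖ ^ ((2 + θ) / (1 + θ))) x‖ ^ σ < c₀ := by
  intro x hx hxb
  set β := (2 + θ) / (1 + θ)
  have hβ : (β - 1) * (1 + θ) = 1 := by simp only [β]; field_simp; ring
  have hβ₀ : 0 < β := by positivity
  have hb : 0 ≤ b := (norm_nonneg _).trans (hB x hxb)
  have hρ₀ : 0 ≤ ρ₀ := (abs_nonneg _).trans (hϱ x hxb)
  have hA : 0 < (n : ℝ) - 1 + (β - 1) * (p - 1) := by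
    have : (1 : ℝ) ≤ n := by exact_mod_cast hn
    nlinarith
  have hgrad := norm_gradient_const_mul_norm_rpow (κ := κ) (β := β) hx (by positivity)
  have hI : ⟪B x, gradient (fun y : E n => κ * ‖y‖ ^ β) x⟫ ≤ b * (κ * β * ‖x‖ ^ (β - 1)) :=
    hgrad ▸ (real_inner_le_norm _ _).trans (by gcongr; exact hB x hxb)
  rw [pLapN_const_mul_norm_rpow hx hκ₀.ne' hβ₀.ne', hgrad]
  calc _ ≤ κ ^ θ * β ^ (1 + θ) *
          ((n : ℝ) - 1 + (β - 1) * (p - 1) + b + β ^ (σ - (1 + θ)) * ρ₀) :=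
        barrier_estimate hθ hσ₁.le hκ₀ (hκ.trans_le (min_le_left _ _)).le hβ
          (norm_pos_iff.mpr hx) (mem_ball_zero_iff.mp hxb).le hA.le hb hρ₀ hI
          ((le_abs_self _).trans (hϱ x hxb))
    _ < c₀ := rpow_mul_rpow_mul_lt_of_lt_div hθ hκ₀.le hβ₀ (by positivity) hc₀.le
        (hκ.trans_le (min_le_right _ _))

/-- barrier computation (sublinear case). With `β = (2+θ)/(1+θ)` and
`0 < κ < min{1, 𝔠₀^{1/θ} / (β^{(1+θ)/θ}[n−1+(β−1)(p−1)+b+β^{σ−(1+θ)}ρ₀]^{1/θ})}`,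
the barrier `ψ(x) = κ|x|^β` satisfies
`|∇ψ|^θ(Δ_p^N ψ + ⟨B(x),∇ψ⟩) + ϱ(x)|∇ψ|^σ < 𝔠₀` pointwise in `B₁ \ {0}`. -/
theorem barrier_strict_subsolution
    (n : ℕ) (hn : 1 ≤ n) (p θ σ : ℝ) (hp : 1 < p) (hθ : 0 < θ)
    (hσ₁ : θ < σ) (hσ₂ : σ < 1 + θ)
    (B : E n → E n) (ϱ : E n → ℝ) (b ρ₀ c₀ κ : ℝ)
    (hb : 0 ≤ b) (hρ₀ : 0 ≤ ρ₀) (hc₀ : 0 < c₀)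
    (hB : ∀ x ∈ ball (0 : E n) 1, ‖B x‖ ≤ b)
    (hϱ : ∀ x ∈ ball (0 : E n) 1, |ϱ x| ≤ ρ₀)
    (hκ₀ : 0 < κ)
    (hκ : κ < min 1 (c₀ ^ (1 / θ) /
      (((2 + θ) / (1 + θ)) ^ ((1 + θ) / θ) *
        ((n : ℝ) - 1 + ((2 + θ) / (1 + θ) - 1) * (p - 1) + b +
          ((2 + θ) / (1 + θ)) ^ (σ - (1 + θ)) * ρ₀) ^ (1 / θ)))) :
    ∀ x : E n, x ≠ 0 → x ∈ ball (0 : E n) 1 →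
      ‖gradient (fun y : E n => κ * ‖y‖ ^ ((2 + θ) / (1 + θ))) x‖ ^ θ *
          (pLapN p (fun y : E n => κ * ‖y‖ ^ ((2 + θ) / (1 + θ))) x +
            ⟪B x, gradient (fun y : E n => κ * ‖y‖ ^ ((2 + θ) / (1 + θ))) x⟫) +
        ϱ x * ‖gradient (fun y : E n => κ * ‖y‖ ^ ((2 + θ) / (1 + θ))) x‖ ^ σ < c₀ :=
  barrier_strict_subsolution_general n hn p θ σ hp hθ hσ₁ B ϱ b ρ₀ c₀ κ hc₀ hB hϱ hκ₀ hκ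

end
end

section
/- Let n ≥ 1, p ∈ (1, ∞), θ > 0, m ∈ [0, 1+θ), σ ∈ (θ, 1+θ), R > r > 0, x₀ ∈ ℝⁿ, and set β̂ = (2+θ)/(1+θ−m). Let c > 0 be the constant determined by c^{1+θ−m} β̂^{1+θ} [ (p−1)(β̂−1) + 1 ] = 1, and define on the annulus A = { x : r < |x−x₀| < R }: Φ(x) = c (|x−x₀| − r)^{β̂}, B(x) = −(n−1)(x−x₀)/|x−x₀|², and ϱ(x) = (cβ̂)^{1+θ−σ} (|x−x₀| − r)^{(β̂−1)(1+θ−σ) − 1}. Then for every x ∈ A one has ∇Φ(x) ≠ 0 and the pointwise identity |∇Φ(x)|^θ ( Δ_p^N Φ(x) + ⟨B(x), ∇Φ(x)⟩ ) + ϱ(x) |∇Φ(x)|^σ = Φ(x)^m. -/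
open scoped RealInnerProductSpace
open Metric Filter

noncomputable section

variable {n : ℕ}

/-!
For a radial function `u y = f ‖y - x₀‖` and `t = ‖x - x₀‖`, the gradient is `f'(t)` times the
radial unit vector `e` and the Hessian is `(f'(t)/t) I + (f''(t) - f'(t)/t) e ⊗ e`. Hence
`Δ_p^N u = (p - 1) f''(t) + (n - 1) f'(t)/t`, and the drift `B` cancels the second term.
For `f s = c (s - r)^β̂` both terms on the left are multiples of
`(c β̂)^(1+θ) (t - r)^((β̂-1)(1+θ)-1)`, with coefficients `(p - 1)(β̂ - 1)` and `1`; the choice of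
`β̂` makes `Φ^m` a power of `t - r` of the same order, and the normalisation of `c` matches the
coefficients.
-/
open Topology

section Radial

variable {F : Type*} [NormedAddCommGroup F] [InnerProductSpace ℝ F]

theorem hasFDerivAt_norm_of_ne_zero {x : F} (hx : x ≠ 0) :
    HasFDerivAt (‖·‖) (innerSL ℝ (‖x‖⁻¹ • x)) x := by
  have hsqrt : HasDerivAt Real.sqrt (1 / (2 * ‖x‖)) (‖x‖ ^ 2) := by
    simpa [Real.sqrt_sq (norm_nonneg x)] using
      Real.hasDerivAt_sqrt (pow_ne_zero 2 (norm_ne_zero_iff.2 hx))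
  have h := hsqrt.comp_hasFDerivAt x (hasStrictFDerivAt_norm_sq x).hasFDerivAt
  rw [show Real.sqrt ∘ (‖·‖ ^ 2) = (‖·‖ : F → ℝ) from
    funext fun y => Real.sqrt_sq (norm_nonneg y)] at h
  refine h.congr_fderiv (ContinuousLinearMap.ext fun w => ?_)
  have hx' : ‖x‖ ≠ 0 := norm_ne_zero_iff.2 hx
  simp only [smul_apply, innerSL_apply_apply, real_inner_smul_left, smul_eq_mul]
  field_simp
  ring

variable {x₀ x : F}

theorem hasFDerivAt_norm_sub (hx : x ≠ x₀) :
    HasFDerivAt (fun y => ‖y - x₀‖) (innerSL ℝ (‖x - x₀‖⁻¹ • (x - x₀))) x :=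
  ((hasFDerivAt_norm_of_ne_zero (sub_ne_zero.2 hx)).comp x
    ((hasFDerivAt_id x).sub_const x₀)).congr_fderiv (by ext; simp)

theorem HasDerivAt.hasGradientAt_comp_norm_sub [CompleteSpace F] {f : ℝ → ℝ} {d : ℝ}
    (hf : HasDerivAt f d ‖x - x₀‖) (hx : x ≠ x₀) :
    HasGradientAt (fun y => f ‖y - x₀‖) ((d / ‖x - x₀‖) • (x - x₀)) x := by
  rw [hasGradientAt_iff_hasFDerivAt]
  refine (hf.comp_hasFDerivAt x (hasFDerivAt_norm_sub hx)).congr_fderiv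
    (ContinuousLinearMap.ext fun w => ?_)
  simp only [map_smul, map_sub, smul_apply, sub_apply, coe_innerSL_apply, smul_eq_mul,
    InnerProductSpace.toDual_apply_apply]
  ring

theorem gradient_comp_norm_sub [CompleteSpace F] {f : ℝ → ℝ} {d : ℝ}
    (hf : HasDerivAt f d ‖x - x₀‖) (hx : x ≠ x₀) :
    gradient (fun y => f ‖y - x₀‖) x = (d / ‖x - x₀‖) • (x - x₀) :=
  (hf.hasGradientAt_comp_norm_sub hx).gradient

theorem norm_gradient_comp_norm_sub [CompleteSpace F] {f : ℝ → ℝ} {d : ℝ}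
    (hf : HasDerivAt f d ‖x - x₀‖) (hx : x ≠ x₀) : ‖gradient (fun y => f ‖y - x₀‖) x‖ = |d| := by
  have ht : ‖x - x₀‖ ≠ 0 := norm_ne_zero_iff.2 (sub_ne_zero.2 hx)
  rw [gradient_comp_norm_sub hf hx, norm_smul, Real.norm_eq_abs, abs_div, abs_norm,
    div_mul_cancel₀ _ ht]

theorem HasDerivAt.hasFDerivAt_comp_norm_sub_smul {g : ℝ → ℝ} {g' : ℝ}
    (hg : HasDerivAt g g' ‖x - x₀‖) (hx : x ≠ x₀) :
    HasFDerivAt (fun y => g ‖y - x₀‖ • (y - x₀))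
      (g ‖x - x₀‖ • ContinuousLinearMap.id ℝ F +
        (g' / ‖x - x₀‖) • (innerSL ℝ (x - x₀)).smulRight (x - x₀)) x := by
  refine ((hg.comp_hasFDerivAt x (hasFDerivAt_norm_sub hx)).smul
    ((hasFDerivAt_id x).sub_const x₀)).congr_fderiv (ContinuousLinearMap.ext fun w => ?_)
  simp [smul_smul, div_eq_inv_mul, mul_assoc, mul_left_comm]

end Radial

section RankOneUpdate

variable {F : Type*} [NormedAddCommGroup F] [InnerProductSpace ℝ F]

theorem trace_smul_id_add_smul_smulRight [FiniteDimensional ℝ F] (a b : ℝ) (v : F) :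
    LinearMap.trace ℝ F
        (a • ContinuousLinearMap.id ℝ F + b • (innerSL ℝ v).smulRight v).toLinearMap =
      a * Module.finrank ℝ F + b * ‖v‖ ^ 2 := by
  simp

theorem inner_smul_id_add_smul_smulRight_apply_self (a b : ℝ) (v : F) :
    ⟪(a • ContinuousLinearMap.id ℝ F + b • (innerSL ℝ v).smulRight v) v, v⟫ =
      (a + b * ‖v‖ ^ 2) * ‖v‖ ^ 2 := by
  simp only [add_apply, smul_apply, ContinuousLinearMap.id_apply,
    ContinuousLinearMap.smulRight_apply, coe_innerSL_apply, inner_add_left, real_inner_smul_left,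
    real_inner_self_eq_norm_sq]
  ring

end RankOneUpdate

section RadialHessian

variable {f f' : ℝ → ℝ} {f'' : ℝ} {x₀ x : E n}

theorem hess_comp_norm_sub (hx : x ≠ x₀) (hf : ∀ᶠ s in 𝓝 ‖x - x₀‖, HasDerivAt f (f' s) s)
    (hf' : HasDerivAt f' f'' ‖x - x₀‖) :
    hess (fun y => f ‖y - x₀‖) x =
      (f' ‖x - x₀‖ / ‖x - x₀‖) • ContinuousLinearMap.id ℝ (E n) +
        ((f'' - f' ‖x - x₀‖ / ‖x - x₀‖) / ‖x - x₀‖ ^ 2) •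
          (innerSL ℝ (x - x₀)).smulRight (x - x₀) := by
  have hgrad : gradient (fun y => f ‖y - x₀‖) =ᶠ[𝓝 x]
      fun y => (f' ‖y - x₀‖ / ‖y - x₀‖) • (y - x₀) := by
    filter_upwards [((continuous_id.sub continuous_const).norm.tendsto x).eventually hf,
      eventually_ne_nhds hx] with y hfy hy
    exact gradient_comp_norm_sub hfy hy
  have ht : ‖x - x₀‖ ≠ 0 := norm_ne_zero_iff.2 (sub_ne_zero.2 hx)
  have hquot : HasDerivAt (fun s => f' s / s)
      ((f'' * ‖x - x₀‖ - f' ‖x - x₀‖ * 1) / ‖x - x₀‖ ^ 2) ‖x - x₀‖ :=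
    hf'.div (hasDerivAt_id' _) ht
  rw [hess, hgrad.fderiv_eq, (hquot.hasFDerivAt_comp_norm_sub_smul hx).fderiv]
  congr 2
  field_simp

theorem pLapN_comp_norm_sub (p : ℝ) (hx : x ≠ x₀)
    (hf : ∀ᶠ s in 𝓝 ‖x - x₀‖, HasDerivAt f (f' s) s) (hf' : HasDerivAt f' f'' ‖x - x₀‖)
    (hd : f' ‖x - x₀‖ ≠ 0) :
    pLapN p (fun y => f ‖y - x₀‖) x = (p - 1) * f'' + (n - 1) * (f' ‖x - x₀‖ / ‖x - x₀‖) := by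
  have ht : ‖x - x₀‖ ≠ 0 := norm_ne_zero_iff.2 (sub_ne_zero.2 hx)
  rw [pLapN, lap, hess_comp_norm_sub hx hf hf', gradient_comp_norm_sub hf.self_of_nhds hx,
    map_smul, real_inner_smul_left, real_inner_smul_right,
    inner_smul_id_add_smul_smulRight_apply_self, trace_smul_id_add_smul_smulRight,
    finrank_euclideanSpace_fin, norm_smul, Real.norm_eq_abs, mul_pow, sq_abs]
  field_simp
  ring

theorem pLapN_comp_norm_sub_add_inner_drift (p : ℝ) (hx : x ≠ x₀)
    (hf : ∀ᶠ s in 𝓝 ‖x - x₀‖, HasDerivAt f (f' s) s) (hf' : HasDerivAt f' f'' ‖x - x₀‖)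
    (hd : f' ‖x - x₀‖ ≠ 0) :
    pLapN p (fun y => f ‖y - x₀‖) x +
        ⟪(-((n : ℝ) - 1) / ‖x - x₀‖ ^ 2) • (x - x₀), gradient (fun y => f ‖y - x₀‖) x⟫ =
      (p - 1) * f'' := by
  have ht : ‖x - x₀‖ ≠ 0 := norm_ne_zero_iff.2 (sub_ne_zero.2 hx)
  rw [pLapN_comp_norm_sub p hx hf hf' hd, gradient_comp_norm_sub hf.self_of_nhds hx,
    real_inner_smul_left, real_inner_smul_right, real_inner_self_eq_norm_sq]
  field_simp
  ring

end RadialHessian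

theorem hasDerivAt_const_mul_sub_rpow (c r β : ℝ) {s : ℝ} (hs : r < s) :
    HasDerivAt (fun s => c * (s - r) ^ β) (c * β * (s - r) ^ (β - 1)) s := by
  simpa [mul_assoc] using
    (((hasDerivAt_id' s).sub_const r).rpow_const (Or.inl (sub_pos.2 hs).ne')).const_mul c

theorem henon_profile_balance {p θ σ m β c s : ℝ} (hc : 0 < c) (hβ : 0 < β) (hs : 0 < s)
    (hβm : β * (1 + θ - m) = 2 + θ)
    (hceq : c ^ (1 + θ - m) * β ^ (1 + θ) * ((p - 1) * (β - 1) + 1) = 1) :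
    (c * β * s ^ (β - 1)) ^ θ * ((p - 1) * (c * β * (β - 1) * s ^ (β - 1 - 1))) +
        (c * β) ^ (1 + θ - σ) * s ^ ((β - 1) * (1 + θ - σ) - 1) * (c * β * s ^ (β - 1)) ^ σ =
      (c * s ^ β) ^ m := by
  have hcβ : 0 < c * β := mul_pos hc hβ
  have hsplit (q : ℝ) : (c * β * s ^ (β - 1)) ^ q = (c * β) ^ q * s ^ ((β - 1) * q) := by
    rw [Real.mul_rpow hcβ.le (Real.rpow_nonneg hs.le _), ← Real.rpow_mul hs.le]
  have hdiffusion_term : (c * β * s ^ (β - 1)) ^ θ * (c * β * (β - 1) * s ^ (β - 1 - 1)) =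
      (β - 1) * ((c * β) ^ (1 + θ) * s ^ ((β - 1) * (1 + θ) - 1)) := by
    rw [hsplit, show (β - 1) * (1 + θ) - 1 = (β - 1) * θ + (β - 1 - 1) by ring,
      Real.rpow_add hs, Real.rpow_add hcβ, Real.rpow_one]
    ring
  have hgradient_term : (c * β) ^ (1 + θ - σ) * s ^ ((β - 1) * (1 + θ - σ) - 1) *
      (c * β * s ^ (β - 1)) ^ σ = (c * β) ^ (1 + θ) * s ^ ((β - 1) * (1 + θ) - 1) := by
    rw [hsplit, mul_mul_mul_comm, ← Real.rpow_add hcβ, ← Real.rpow_add hs]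
    congr 2 <;> ring
  have hsource : (c * s ^ β) ^ m =
      ((p - 1) * (β - 1) + 1) * ((c * β) ^ (1 + θ) * s ^ ((β - 1) * (1 + θ) - 1)) := by
    have hexp : β * m = (β - 1) * (1 + θ) - 1 := by linear_combination -hβm
    have hc1θ : c ^ (1 + θ) = c ^ m * c ^ (1 + θ - m) := by
      rw [← Real.rpow_add hc, add_sub_cancel]
    calc (c * s ^ β) ^ m = c ^ m * s ^ ((β - 1) * (1 + θ) - 1) := by
          rw [Real.mul_rpow hc.le (Real.rpow_nonneg hs.le _), ← Real.rpow_mul hs.le, hexp]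
      _ = c ^ m * (c ^ (1 + θ - m) * β ^ (1 + θ) * ((p - 1) * (β - 1) + 1)) *
            s ^ ((β - 1) * (1 + θ) - 1) := by rw [hceq, mul_one]
      _ = _ := by rw [Real.mul_rpow hc.le hβ.le, hc1θ]; ring
  rw [hsource, hgradient_term]
  linear_combination (p - 1) * hdiffusion_term

theorem henon_radial_profile_identity_general
    (n : ℕ) (p θ σ m R r : ℝ) (x₀ : E n)
    (hθ : 0 < θ) (hm₁ : m < 1 + θ)
    (hr : 0 < r)
    (c : ℝ) (hc : 0 < c)
    (hceq : c ^ (1 + θ - m) * ((2 + θ) / (1 + θ - m)) ^ (1 + θ) *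
      ((p - 1) * ((2 + θ) / (1 + θ - m) - 1) + 1) = 1) :
    ∀ x : E n, r < ‖x - x₀‖ → ‖x - x₀‖ < R →
      gradient (fun y : E n => c * (‖y - x₀‖ - r) ^ ((2 + θ) / (1 + θ - m))) x ≠ 0 ∧
      ‖gradient (fun y : E n => c * (‖y - x₀‖ - r) ^ ((2 + θ) / (1 + θ - m))) x‖ ^ θ *
          (pLapN p (fun y : E n => c * (‖y - x₀‖ - r) ^ ((2 + θ) / (1 + θ - m))) x +
            ⟪(-((n : ℝ) - 1) / ‖x - x₀‖ ^ 2) • (x - x₀),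
              gradient (fun y : E n => c * (‖y - x₀‖ - r) ^ ((2 + θ) / (1 + θ - m))) x⟫) +
        (c * ((2 + θ) / (1 + θ - m))) ^ (1 + θ - σ) *
            (‖x - x₀‖ - r) ^ (((2 + θ) / (1 + θ - m) - 1) * (1 + θ - σ) - 1) *
          ‖gradient (fun y : E n => c * (‖y - x₀‖ - r) ^ ((2 + θ) / (1 + θ - m))) x‖ ^ σ =
        (c * (‖x - x₀‖ - r) ^ ((2 + θ) / (1 + θ - m))) ^ m := by
  intro x hrx _
  set β := (2 + θ) / (1 + θ - m)
  have hD : 0 < 1 + θ - m := by linarith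
  have hβ : 0 < β := by positivity
  have hs : 0 < ‖x - x₀‖ - r := sub_pos.2 hrx
  have hx : x ≠ x₀ := by
    rintro rfl
    rw [sub_self, norm_zero] at hrx
    linarith
  have hf : ∀ᶠ s in 𝓝 ‖x - x₀‖,
      HasDerivAt (fun s => c * (s - r) ^ β) (c * β * (s - r) ^ (β - 1)) s :=
    eventually_gt_nhds hrx |>.mono fun s hrs => hasDerivAt_const_mul_sub_rpow c r β hrs
  have hf' := hasDerivAt_const_mul_sub_rpow (c * β) r (β - 1) hrx
  have hd : 0 < c * β * (‖x - x₀‖ - r) ^ (β - 1) := by positivity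
  have hnorm := norm_gradient_comp_norm_sub hf.self_of_nhds hx
  rw [abs_of_pos hd] at hnorm
  refine ⟨norm_ne_zero_iff.1 (hnorm ▸ hd.ne'), ?_⟩
  rw [pLapN_comp_norm_sub_add_inner_drift p hx hf hf' hd.ne', hnorm]
  exact henon_profile_balance hc hβ hs (div_mul_cancel₀ _ hD.ne') hceq

/-- the Hénon-type radial profile. With `β̂ = (2+θ)/(1+θ−m)` and
`c > 0` determined by `c^{1+θ−m} β̂^{1+θ}[(p−1)(β̂−1)+1] = 1`, the profile
`Φ(x) = c(|x−x₀|−r)^{β̂}` satisfies, on the annulus `r < |x−x₀| < R`,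
`∇Φ(x) ≠ 0` and `|∇Φ|^θ(Δ_p^N Φ + ⟨B(x),∇Φ⟩) + ϱ(x)|∇Φ|^σ = Φ^m`,
where `B(x) = −(n−1)(x−x₀)/|x−x₀|²` and
`ϱ(x) = (cβ̂)^{1+θ−σ}(|x−x₀|−r)^{(β̂−1)(1+θ−σ)−1}`. -/
theorem henon_radial_profile_identity
    (n : ℕ) (hn : 1 ≤ n) (p θ σ m R r : ℝ) (x₀ : E n)
    (hp : 1 < p) (hθ : 0 < θ) (hm₀ : 0 ≤ m) (hm₁ : m < 1 + θ)
    (hσ₁ : θ < σ) (hσ₂ : σ < 1 + θ) (hr : 0 < r) (hR : r < R)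
    (c : ℝ) (hc : 0 < c)
    (hceq : c ^ (1 + θ - m) * ((2 + θ) / (1 + θ - m)) ^ (1 + θ) *
      ((p - 1) * ((2 + θ) / (1 + θ - m) - 1) + 1) = 1) :
    ∀ x : E n, r < ‖x - x₀‖ → ‖x - x₀‖ < R →
      gradient (fun y : E n => c * (‖y - x₀‖ - r) ^ ((2 + θ) / (1 + θ - m))) x ≠ 0 ∧
      ‖gradient (fun y : E n => c * (‖y - x₀‖ - r) ^ ((2 + θ) / (1 + θ - m))) x‖ ^ θ *
          (pLapN p (fun y : E n => c * (‖y - x₀‖ - r) ^ ((2 + θ) / (1 + θ - m))) x +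
            ⟪(-((n : ℝ) - 1) / ‖x - x₀‖ ^ 2) • (x - x₀),
              gradient (fun y : E n => c * (‖y - x₀‖ - r) ^ ((2 + θ) / (1 + θ - m))) x⟫) +
        (c * ((2 + θ) / (1 + θ - m))) ^ (1 + θ - σ) *
            (‖x - x₀‖ - r) ^ (((2 + θ) / (1 + θ - m) - 1) * (1 + θ - σ) - 1) *
          ‖gradient (fun y : E n => c * (‖y - x₀‖ - r) ^ ((2 + θ) / (1 + θ - m))) x‖ ^ σ =
        (c * (‖x - x₀‖ - r) ^ ((2 + θ) / (1 + θ - m))) ^ m :=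
  henon_radial_profile_identity_general n p θ σ m R r x₀ hθ hm₁ hr c hc hceq
end
end
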